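/- If z ∈ M(G) lies on the boundary of each of the sets M(g) = {x : x₀ − g₀ ≤ min(x_j − g_j : j ∈ [d])} that contain it (for g ∈ G), then for every ε > 0 the point z − ε(0,1,…,1) is not contained in M(G); consequently z is not an interior point of M(G). -/
import Mathlib


def Msector {d : ℕ} (g : Fin (d + 1) → ℝ) : Set (Fin (d + 1) → ℝ) :=
  {x | ∀ j, j ≠ 0 → x 0 - g 0 ≤ x j - g j}

def Mcone {d : ℕ} (G : Set (Fin (d + 1) → ℝ)) : Set (Fin (d + 1) → ℝ) :=
  ⋃ g ∈ G, Msector g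

/-- If `z ∈ M(G)` lies on the boundary of each sector `M(g)` containing it, then
for every `ε > 0` the point `z - ε·(0,1,…,1)` is not in `M(G)`; consequently `z`
is not an interior point of `M(G)`. -/
theorem boundary_point_not_interior {d : ℕ} (G : Finset (Fin (d + 1) → ℝ))
    (z : Fin (d + 1) → ℝ) (hz : z ∈ Mcone (G : Set (Fin (d + 1) → ℝ)))
    (hbd : ∀ g ∈ G, z ∈ Msector g → z ∈ frontier (Msector g)) :
    (∀ ε : ℝ, 0 < ε →
        (z - ε • (fun k => if k = 0 then (0 : ℝ) else 1)) ∉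
          Mcone (G : Set (Fin (d + 1) → ℝ)))
    ∧ z ∉ interior (Mcone (G : Set (Fin (d + 1) → ℝ))) := by
  classical
  have key : ∀ g ∈ G, ∃ j, j ≠ 0 ∧ z j - g j ≤ z 0 - g 0 := by
    intro g hg
    by_cases hzg : z ∈ Msector g
    · have hfr := hbd g hg hzg
      by_contra h
      push_neg at h
      have hopen : IsOpen {x : Fin (d+1) → ℝ | ∀ j, j ≠ 0 → x 0 - g 0 < x j - g j} := by
        have heq : {x : Fin (d+1) → ℝ | ∀ j, j ≠ 0 → x 0 - g 0 < x j - g j}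
            = ⋂ j, ⋂ (_ : j ≠ 0), {x : Fin (d+1) → ℝ | x 0 - g 0 < x j - g j} := by
          ext x; simp [Set.mem_iInter]
        rw [heq]
        exact isOpen_iInter_of_finite fun j => isOpen_iInter_of_finite fun hj =>
          isOpen_lt (by continuity) (by continuity)
      have hsub : {x : Fin (d+1) → ℝ | ∀ j, j ≠ 0 → x 0 - g 0 < x j - g j} ⊆ Msector g :=
        fun x hx j hj => (hx j hj).le
      have hz' : z ∈ interior (Msector g) :=
        interior_maximal hsub hopen h
      exact hfr.2 hz'
    · simp only [Msector, Set.mem_setOf_eq, not_forall, not_le] at hzg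
      obtain ⟨j, hj, hlt⟩ := hzg
      exact ⟨j, hj, hlt.le⟩
  have h1 : ∀ ε : ℝ, 0 < ε →
      (z - ε • (fun k => if k = 0 then (0 : ℝ) else 1)) ∉
        Mcone (G : Set (Fin (d + 1) → ℝ)) := by
    intro ε hε hmem
    rw [Mcone] at hmem
    simp only [Set.mem_iUnion] at hmem
    obtain ⟨g, hg, hsec⟩ := hmem
    obtain ⟨j, hj, hle⟩ := key g hg
    have hthis := hsec j hj
    simp only [Pi.sub_apply, Pi.smul_apply, smul_eq_mul, if_neg hj, if_true, mul_zero,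
      mul_one, sub_zero] at hthis
    linarith
  refine ⟨h1, fun hint => ?_⟩
  obtain ⟨r, hr, hball⟩ := Metric.mem_nhds_iff.mp (mem_interior_iff_mem_nhds.mp hint)
  have hvnorm : ‖(fun k : Fin (d+1) => if k = 0 then (0:ℝ) else 1)‖ ≤ 1 := by
    rw [pi_norm_le_iff_of_nonneg zero_le_one]
    intro i
    split_ifs <;> simp
  have hε : (0:ℝ) < r / 2 := by linarith
  have hmem : (z - (r/2) • (fun k => if k = 0 then (0 : ℝ) else 1)) ∈ Metric.ball z r := by
    rw [Metric.mem_ball, dist_eq_norm]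
    have : z - (r/2) • (fun k : Fin (d+1) => if k = 0 then (0 : ℝ) else 1) - z
        = -((r/2) • (fun k => if k = 0 then (0 : ℝ) else 1)) := by ring_nf
    rw [this, norm_neg, norm_smul]
    have : ‖(r/2 : ℝ)‖ = r/2 := by rw [Real.norm_eq_abs, abs_of_pos hε]
    rw [this]
    nlinarith
  exact h1 (r/2) hε (hball hmem)
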